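/- arXiv:2310.20230 — 8 statements merged into one kernel-verified Lean document; each statement's English description precedes it below -/
import Mathlib

section
/- Let G be a connected chain graph with binary string 0^{a_1}1^{a_2}…0^{a_{2h-1}}1^{a_{2h}} on n = a_1 + ⋯ + a_{2h} vertices. Then the adjacency spectrum of G consists of 2h distinct nonzero real eigenvalues (namely the eigenvalues of the 2h×2h quotient adjacency matrix Ã(G)) together with the eigenvalue 0 with multiplicity n − 2h. In particular, the characteristic polynomial of A(G) equals x^{n−2h} times the characteristic polynomial of Ã(G), and Ã(G) has 2h distinct nonzero real eigenvalues. -/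
open Matrix Polynomial

/-- Adjacency between cells of a chain graph: cell `k` (0-indexed) is a "zero"/white cell
when `k` is even and a "one"/black cell when `k` is odd; white cell `2i` is joined to
black cell `2j+1` iff `2i < 2j+1`. -/
def cellAdj {m : ℕ} (k l : Fin m) : Prop :=
  (Even (k : ℕ) ∧ Odd (l : ℕ) ∧ (k : ℕ) < l) ∨
  (Even (l : ℕ) ∧ Odd (k : ℕ) ∧ (l : ℕ) < k)

instance {m : ℕ} (k l : Fin m) : Decidable (cellAdj k l) := by
  unfold cellAdj; infer_instance

/-- The chain graph with binary string `0^{a 0} 1^{a 1} ⋯ 0^{a (2h-2)} 1^{a (2h-1)}`. -/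
def chainGraph (h : ℕ) (a : Fin (2 * h) → ℕ) :
    SimpleGraph (Σ k : Fin (2 * h), Fin (a k)) where
  Adj u v := cellAdj u.1 v.1
  symm := by
    constructor
    intro u v huv
    unfold cellAdj at *
    exact huv.symm
  loopless := by
    constructor
    intro u hu
    rcases hu with ⟨_, _, hlt⟩ | ⟨_, _, hlt⟩ <;> exact lt_irrefl _ hlt

instance (h : ℕ) (a : Fin (2 * h) → ℕ) : DecidableRel (chainGraph h a).Adj :=
  fun u v => inferInstanceAs (Decidable (cellAdj u.1 v.1))

/-- Adjacency matrix (over ℝ) of the chain graph. -/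
noncomputable def chainA (h : ℕ) (a : Fin (2 * h) → ℕ) :
    Matrix (Σ k : Fin (2 * h), Fin (a k)) (Σ k : Fin (2 * h), Fin (a k)) ℝ :=
  (chainGraph h a).adjMatrix ℝ

/-- Seidel matrix `J - I - 2A` of a graph. -/
noncomputable def seidel {V : Type*} [Fintype V] [DecidableEq V]
    (G : SimpleGraph V) [DecidableRel G.Adj] : Matrix V V ℝ :=
  (Matrix.of fun _ _ => (1 : ℝ)) - 1 - (2 : ℝ) • G.adjMatrix ℝ

/-- Seidel matrix of the chain graph. -/
noncomputable def chainS (h : ℕ) (a : Fin (2 * h) → ℕ) :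
    Matrix (Σ k : Fin (2 * h), Fin (a k)) (Σ k : Fin (2 * h), Fin (a k)) ℝ :=
  seidel (chainGraph h a)

/-- Quotient adjacency matrix `Ã(G)` of the chain graph. -/
noncomputable def quotA (h : ℕ) (a : Fin (2 * h) → ℕ) :
    Matrix (Fin (2 * h)) (Fin (2 * h)) ℝ :=
  Matrix.of fun k l => if cellAdj k l then (a l : ℝ) else 0

/-- Quotient Seidel matrix `S̃(G)` of the chain graph. -/
noncomputable def quotS (h : ℕ) (a : Fin (2 * h) → ℕ) :
    Matrix (Fin (2 * h)) (Fin (2 * h)) ℝ :=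
  Matrix.of fun k l =>
    if k = l then (a k : ℝ) - 1 else if cellAdj k l then -(a l : ℝ) else (a l : ℝ)


lemma my_eval_charpoly {n : Type*} [Fintype n] [DecidableEq n] (M : Matrix n n ℝ) (t : ℝ) :
    M.charpoly.eval t = (t • (1 : Matrix n n ℝ) - M).det := by
  rw [Matrix.charpoly, ← Polynomial.coe_evalRingHom, RingHom.map_det]
  congr 1
  ext i j
  by_cases hij : i = j <;>
  simp [hij, Matrix.charmatrix_apply, Matrix.one_apply, Matrix.diagonal_apply]

lemma my_charpoly_conj {n : Type*} [Fintype n] [DecidableEq n] (P Q M : Matrix n n ℝ)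
    (hPQ : P * Q = 1) : (P * M * Q).charpoly = M.charpoly := by
  have hQP : Q * P = 1 := mul_eq_one_comm.mp hPQ
  apply Polynomial.funext
  intro t
  rw [my_eval_charpoly, my_eval_charpoly]
  have : t • (1 : Matrix n n ℝ) - P * M * Q = P * (t • 1 - M) * Q := by
    rw [Matrix.mul_sub, Matrix.sub_mul]
    congr 1
    rw [Matrix.mul_smul, Matrix.smul_mul, mul_one, hPQ]
  rw [this, Matrix.det_mul, Matrix.det_mul]
  have h1 : P.det * Q.det = 1 := by rw [← Matrix.det_mul, hPQ, Matrix.det_one]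
  calc P.det * (t • (1:Matrix n n ℝ) - M).det * Q.det
      = (t • (1:Matrix n n ℝ) - M).det * (P.det * Q.det) := by ring
    _ = (t • (1:Matrix n n ℝ) - M).det := by rw [h1, mul_one]

lemma my_key_det {μ : Type*} [Fintype μ] [DecidableEq μ] {t : ℝ} (ht : t ≠ 0) (M : Matrix μ μ ℝ) :
    (t • (1 : Matrix μ μ ℝ) - M).det = t ^ (Fintype.card μ) * (1 + (-t⁻¹) • M).det := by
  rw [← Matrix.det_smul]
  congr 1
  rw [smul_add, smul_smul, mul_neg, mul_inv_cancel₀ ht, neg_one_smul, sub_eq_add_neg]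

lemma my_charpoly_rect {ι κ : Type*} [Fintype ι] [Fintype κ] [DecidableEq ι] [DecidableEq κ]
    (A : Matrix ι κ ℝ) (B : Matrix κ ι ℝ) :
    (A * B).charpoly * X ^ (Fintype.card κ) = (B * A).charpoly * X ^ (Fintype.card ι) := by
  apply Polynomial.eq_of_infinite_eval_eq
  apply Set.Infinite.mono (s := {x : ℝ | x ≠ 0})
  swap
  · exact Set.Finite.infinite_compl (Set.finite_singleton 0)
  intro t ht
  simp only [Set.mem_setOf_eq, Polynomial.eval_mul, Polynomial.eval_pow, Polynomial.eval_X] at *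
  rw [my_eval_charpoly, my_eval_charpoly]
  rw [my_key_det ht (A * B), my_key_det ht (B * A)]
  have h2 : (1 + (-t⁻¹) • (A * B)).det = (1 + (-t⁻¹) • (B * A)).det := by
    have e1 : (-t⁻¹) • (A * B) = ((-t⁻¹) • A) * B := by rw [Matrix.smul_mul]
    have e2 : (-t⁻¹) • (B * A) = B * ((-t⁻¹) • A) := by rw [Matrix.mul_smul]
    rw [e1, e2, Matrix.det_one_add_mul_comm]
  rw [h2]; ring

lemma my_charpoly_diagonal {n : Type*} [Fintype n] [DecidableEq n] (d : n → ℝ) :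
    (Matrix.diagonal d).charpoly = ∏ i, (X - C (d i)) := by
  rw [Matrix.charpoly]
  have : charmatrix (Matrix.diagonal d) = Matrix.diagonal (fun i => (X : ℝ[X]) - C (d i)) := by
    ext i j
    by_cases hij : i = j <;> simp [Matrix.charmatrix_apply, Matrix.diagonal_apply, hij]
  rw [this, Matrix.det_diagonal]

lemma my_charpoly_hermitian {n : Type*} [Fintype n] [DecidableEq n]
    (A : Matrix n n ℝ) (hA : A.IsHermitian) :
    A.charpoly = ∏ i, (X - C (hA.eigenvalues i)) := by
  have hU := (Matrix.mem_unitaryGroup_iff).mp (hA.eigenvectorUnitary).2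
  conv_lhs => rw [hA.spectral_theorem]
  rw [Unitary.conjStarAlgAut_apply]
  rw [my_charpoly_conj _ _ _ hU]
  rw [show (Matrix.diagonal (RCLike.ofReal ∘ hA.eigenvalues) : Matrix n n ℝ)
      = Matrix.diagonal hA.eigenvalues from by ext i j; simp [Matrix.diagonal_apply],
    my_charpoly_diagonal]

section Factor
variable (h : ℕ) (a : Fin (2 * h) → ℕ)

noncomputable def Rmat : Matrix (Σ k : Fin (2 * h), Fin (a k)) (Fin (2 * h)) ℝ :=
  Matrix.of fun v l => if v.1 = l then 1 else 0

noncomputable def Qmat : Matrix (Fin (2 * h)) (Σ k : Fin (2 * h), Fin (a k)) ℝ :=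
  Matrix.of fun l v => if cellAdj l v.1 then 1 else 0

lemma chainA_eq : chainA h a = Rmat h a * Qmat h a := by
  ext u v
  simp only [chainA, SimpleGraph.adjMatrix_apply, Matrix.mul_apply, Rmat, Qmat, Matrix.of_apply]
  rw [Finset.sum_eq_single u.1]
  · simp [chainGraph]; congr
  · intro b _ hb; simp [Ne.symm hb]
  · simp

lemma quotA_eq : quotA h a = Qmat h a * Rmat h a := by
  ext k l
  simp only [quotA, Matrix.mul_apply, Qmat, Rmat, Matrix.of_apply]
  rw [← Finset.univ_sigma_univ, Finset.sum_sigma]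
  rw [Finset.sum_eq_single l]
  · by_cases hc : cellAdj k l <;> simp [hc, mul_comm]
  · intro b _ hb; simp [hb]
  · simp

lemma part1 (ha : ∀ k, 1 ≤ a k) :
    (chainA h a).charpoly = X ^ ((∑ k, a k) - 2 * h) * (quotA h a).charpoly := by
  have hcard : Fintype.card (Σ k : Fin (2 * h), Fin (a k)) = ∑ k, a k := by
    simp [Fintype.card_sigma]
  have hcard2 : Fintype.card (Fin (2 * h)) = 2 * h := Fintype.card_fin _
  have hle : 2 * h ≤ ∑ k, a k := by
    calc 2 * h = ∑ _k : Fin (2 * h), 1 := by simp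
    _ ≤ ∑ k, a k := Finset.sum_le_sum fun k _ => ha k
  have key := my_charpoly_rect (Rmat h a) (Qmat h a)
  rw [← chainA_eq, ← quotA_eq, hcard, hcard2] at key
  have : (X : ℝ[X]) ^ (∑ k, a k) = X ^ ((∑ k, a k) - 2 * h) * X ^ (2 * h) := by
    rw [← pow_add]; congr 1; omega
  rw [this, ← mul_assoc] at key
  have hX : (X : ℝ[X]) ^ (2 * h) ≠ 0 := pow_ne_zero _ Polynomial.X_ne_zero
  have := mul_right_cancel₀ hX key
  rw [this]; ring

section Kernel
variable {h : ℕ} {a : Fin (2 * h) → ℕ} {lam : ℝ} {z : Fin (2 * h) → ℝ}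

lemma eqn_lemma (hz : quotA h a *ᵥ z = lam • z) (k : Fin (2 * h)) :
    ∑ l, (if cellAdj k l then (a l : ℝ) * z l else 0) = lam * z k := by
  have := congrFun hz k
  simpa [quotA, Matrix.mulVec, dotProduct, ite_mul] using this

lemma kernel1 (hlam : lam ≠ 0) (hz : quotA h a *ᵥ z = lam • z)
    (hh : 1 ≤ h) (h0 : z ⟨0, by omega⟩ = 0) : z = 0 := by
  have eqn := eqn_lemma hz
  have main : ∀ m : ℕ, ∀ hm : m < 2 * h, z ⟨m, hm⟩ = 0 := by
    intro m
    induction m using Nat.strong_induction_on with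
    | _ m IH =>
      intro hm
      rcases Nat.even_or_odd m with hpar | hpar
      · have hpar' : m % 2 = 0 := Nat.even_iff.mp hpar
        rcases Nat.eq_zero_or_pos m with rfl | hpos
        · exact h0
        · have h2 : 2 ≤ m := by omega
          have hm2 : m - 2 < 2 * h := by omega
          have hm1 : m - 1 < 2 * h := by omega
          have e1 := eqn ⟨m - 2, hm2⟩
          have e2 := eqn ⟨m, hm⟩
          have hsplit : ∀ l : Fin (2 * h),
              (if cellAdj ⟨m - 2, hm2⟩ l then (a l : ℝ) * z l else 0)
                = (if cellAdj ⟨m, hm⟩ l then (a l : ℝ) * z l else 0)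
                  + (if l = ⟨m - 1, hm1⟩ then (a l : ℝ) * z l else 0) := by
            rintro ⟨lv, hl⟩
            have hiff : cellAdj (⟨m - 2, hm2⟩ : Fin (2 * h)) ⟨lv, hl⟩ ↔
                (lv = m - 1 ∨ cellAdj (⟨m, hm⟩ : Fin (2 * h)) ⟨lv, hl⟩) := by
              simp only [cellAdj, Nat.even_iff, Nat.odd_iff]
              omega
            have hexcl : ¬(lv = m - 1 ∧ cellAdj (⟨m, hm⟩ : Fin (2 * h)) ⟨lv, hl⟩) := by
              simp only [cellAdj, Nat.even_iff, Nat.odd_iff]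
              omega
            simp only [Fin.mk.injEq]
            by_cases hc : cellAdj (⟨m, hm⟩ : Fin (2 * h)) ⟨lv, hl⟩
            · have h1 : cellAdj (⟨m - 2, hm2⟩ : Fin (2 * h)) ⟨lv, hl⟩ := hiff.mpr (Or.inr hc)
              have h2' : ¬ lv = m - 1 := fun he => hexcl ⟨he, hc⟩
              simp [h1, hc, h2']
            · by_cases he : lv = m - 1
              · subst he
                have h1 : cellAdj (⟨m - 2, hm2⟩ : Fin (2 * h)) ⟨m - 1, hl⟩ := hiff.mpr (Or.inl rfl)
                simp [h1, hc]
              · have h1 : ¬ cellAdj (⟨m - 2, hm2⟩ : Fin (2 * h)) ⟨lv, hl⟩ := by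
                  rw [hiff]; tauto
                simp [h1, hc, he]
          rw [Finset.sum_congr rfl (fun l _ => hsplit l), Finset.sum_add_distrib,
            Finset.sum_ite_eq' Finset.univ, if_pos (Finset.mem_univ _)] at e1
          rw [e2] at e1
          have z1 : z ⟨m - 2, hm2⟩ = 0 := IH (m - 2) (by omega) hm2
          have z2 : z ⟨m - 1, hm1⟩ = 0 := IH (m - 1) (by omega) hm1
          rw [z1, z2] at e1
          have : lam * z ⟨m, hm⟩ = 0 := by linarith [e1]
          exact (mul_eq_zero.mp this).resolve_left hlam
      · have hpar' : m % 2 = 1 := Nat.odd_iff.mp hpar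
        have e := eqn ⟨m, hm⟩
        have hzero : ∑ l, (if cellAdj (⟨m, hm⟩ : Fin (2 * h)) l then (a l : ℝ) * z l else 0) = 0 := by
          apply Finset.sum_eq_zero
          rintro ⟨lv, hl⟩ -
          by_cases hc : cellAdj (⟨m, hm⟩ : Fin (2 * h)) ⟨lv, hl⟩
          · have hlt : lv < m := by
              revert hc
              simp only [cellAdj, Nat.even_iff, Nat.odd_iff]
              omega
            rw [if_pos hc, IH lv hlt hl, mul_zero]
          · rw [if_neg hc]
        rw [hzero] at e
        exact ((mul_eq_zero.mp e.symm).resolve_left hlam)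
  funext k
  exact main k.1 k.2

lemma kernel0 (ha : ∀ k, 1 ≤ a k) (hz : quotA h a *ᵥ z = (0 : ℝ) • z) : z = 0 := by
  have eqn := eqn_lemma hz
  simp only [zero_mul, Pi.smul_apply] at eqn
  -- odd entries, downward induction on 2*h - m
  have odd0 : ∀ d m, ∀ hm : m < 2 * h, 2 * h - m ≤ d → m % 2 = 1 → z ⟨m, hm⟩ = 0 := by
    intro d
    induction d using Nat.strong_induction_on with
    | _ d IH =>
      intro m hm hd hodd
      have hm1 : m - 1 < 2 * h := by omega
      have e := eqn ⟨m - 1, hm1⟩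
      have hsplit : ∀ l : Fin (2 * h),
          (if cellAdj (⟨m - 1, hm1⟩ : Fin (2 * h)) l then (a l : ℝ) * z l else 0)
            = (if l = ⟨m, hm⟩ then (a l : ℝ) * z l else 0) := by
        rintro ⟨lv, hl⟩
        simp only [Fin.mk.injEq]
        by_cases hc : cellAdj (⟨m - 1, hm1⟩ : Fin (2 * h)) ⟨lv, hl⟩
        · have hfacts : lv % 2 = 1 ∧ m - 1 < lv := by
            revert hc; simp only [cellAdj, Nat.even_iff, Nat.odd_iff]; omega
          by_cases he : lv = m
          · subst he; simp [hc]
          · have hgt : m < lv := by omega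
            have hz0 : z ⟨lv, hl⟩ = 0 :=
              IH (2 * h - lv) (by omega) lv hl (by omega) hfacts.1
            simp [hc, he, hz0]
        · have he : ¬ lv = m := by
            intro he
            apply hc
            subst he
            simp only [cellAdj, Nat.even_iff, Nat.odd_iff]
            omega
          simp [hc, he]
      rw [Finset.sum_congr rfl (fun l _ => hsplit l),
        Finset.sum_ite_eq' Finset.univ, if_pos (Finset.mem_univ _)] at e
      have hA : (0 : ℝ) < (a ⟨m, hm⟩ : ℝ) := by exact_mod_cast ha ⟨m, hm⟩
      exact (mul_eq_zero.mp e).resolve_left (ne_of_gt hA)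
  -- even entries, upward strong induction
  have even0 : ∀ m, ∀ hm : m < 2 * h, m % 2 = 0 → z ⟨m, hm⟩ = 0 := by
    intro m
    induction m using Nat.strong_induction_on with
    | _ m IH =>
      intro hm heven
      have hm1 : m + 1 < 2 * h := by omega
      have e := eqn ⟨m + 1, hm1⟩
      have hsplit : ∀ l : Fin (2 * h),
          (if cellAdj (⟨m + 1, hm1⟩ : Fin (2 * h)) l then (a l : ℝ) * z l else 0)
            = (if l = ⟨m, hm⟩ then (a l : ℝ) * z l else 0) := by
        rintro ⟨lv, hl⟩
        simp only [Fin.mk.injEq]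
        by_cases hc : cellAdj (⟨m + 1, hm1⟩ : Fin (2 * h)) ⟨lv, hl⟩
        · have hfacts : lv % 2 = 0 ∧ lv < m + 1 := by
            revert hc; simp only [cellAdj, Nat.even_iff, Nat.odd_iff]; omega
          by_cases he : lv = m
          · subst he; simp [hc]
          · have hlt : lv < m := by omega
            have hz0 : z ⟨lv, hl⟩ = 0 := IH lv hlt hl hfacts.1
            simp [hc, he, hz0]
        · have he : ¬ lv = m := by
            intro he
            apply hc
            subst he
            simp only [cellAdj, Nat.even_iff, Nat.odd_iff]
            omega
          simp [hc, he]
      rw [Finset.sum_congr rfl (fun l _ => hsplit l),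
        Finset.sum_ite_eq' Finset.univ, if_pos (Finset.mem_univ _)] at e
      have hA : (0 : ℝ) < (a ⟨m, hm⟩ : ℝ) := by exact_mod_cast ha ⟨m, hm⟩
      exact (mul_eq_zero.mp e).resolve_left (ne_of_gt hA)
  funext k
  rcases Nat.even_or_odd (k : ℕ) with hp | hp
  · have := even0 k.1 k.2 (Nat.even_iff.mp hp)
    simpa using this
  · have := odd0 (2 * h) k.1 k.2 (by omega) (Nat.odd_iff.mp hp)
    simpa using this
end Kernel

section Smat
variable (h : ℕ) (a : Fin (2 * h) → ℕ)

noncomputable def Ediag : Matrix (Fin (2 * h)) (Fin (2 * h)) ℝ :=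
  Matrix.diagonal fun k => Real.sqrt (a k)

noncomputable def EdiagInv : Matrix (Fin (2 * h)) (Fin (2 * h)) ℝ :=
  Matrix.diagonal fun k => (Real.sqrt (a k))⁻¹

noncomputable def Smat : Matrix (Fin (2 * h)) (Fin (2 * h)) ℝ :=
  Ediag h a * quotA h a * EdiagInv h a

variable {h a} (ha : ∀ k, 1 ≤ a k)
include ha

lemma sqrt_a_pos (k : Fin (2 * h)) : 0 < Real.sqrt (a k) := by
  have : (0 : ℝ) < (a k : ℝ) := by exact_mod_cast ha k
  exact Real.sqrt_pos.mpr this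

lemma EEinv : Ediag h a * EdiagInv h a = 1 := by
  rw [Ediag, EdiagInv, Matrix.diagonal_mul_diagonal,
    show (fun k : Fin (2*h) => Real.sqrt (a k) * (Real.sqrt (a k))⁻¹) = fun _ => (1:ℝ) from
      funext fun k => mul_inv_cancel₀ (ne_of_gt (sqrt_a_pos ha k)),
    Matrix.diagonal_one]

lemma EinvE : EdiagInv h a * Ediag h a = 1 := by
  rw [Ediag, EdiagInv, Matrix.diagonal_mul_diagonal,
    show (fun k : Fin (2*h) => (Real.sqrt (a k))⁻¹ * Real.sqrt (a k)) = fun _ => (1:ℝ) from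
      funext fun k => inv_mul_cancel₀ (ne_of_gt (sqrt_a_pos ha k)),
    Matrix.diagonal_one]

lemma Smat_apply (k l : Fin (2 * h)) :
    Smat h a k l = if cellAdj k l then Real.sqrt (a k) * Real.sqrt (a l) else 0 := by
  rw [Smat, Ediag, EdiagInv, Matrix.mul_diagonal, Matrix.diagonal_mul]
  by_cases hc : cellAdj k l
  · rw [quotA]
    simp only [Matrix.of_apply, if_pos hc]
    have hs : Real.sqrt (a l) ≠ 0 := ne_of_gt (sqrt_a_pos ha l)
    have h1 : (a l : ℝ) = Real.sqrt (a l) * Real.sqrt (a l) :=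
      (Real.mul_self_sqrt (by positivity)).symm
    have h2' : (a l : ℝ) * (Real.sqrt (a l))⁻¹ = Real.sqrt (a l) := by
      nth_rewrite 1 [h1]
      rw [mul_assoc, mul_inv_cancel₀ hs, mul_one]
    rw [mul_assoc, h2']
  · rw [quotA]
    simp [hc]

omit ha in
lemma cellAdj_symm {m : ℕ} (k l : Fin m) : cellAdj k l ↔ cellAdj l k := by
  unfold cellAdj; tauto

lemma Smat_herm : (Smat h a).IsHermitian := by
  unfold Matrix.IsHermitian
  ext k l
  rw [Matrix.conjTranspose_apply, Smat_apply ha, Smat_apply ha, star_trivial]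
  by_cases hc : cellAdj k l
  · rw [if_pos hc, if_pos ((cellAdj_symm k l).mp hc), mul_comm]
  · rw [if_neg hc, if_neg (fun hx => hc ((cellAdj_symm l k).mp hx))]

lemma quotA_conj : quotA h a = EdiagInv h a * Smat h a * Ediag h a := by
  rw [Smat]
  rw [show EdiagInv h a * (Ediag h a * quotA h a * EdiagInv h a) * Ediag h a
      = (EdiagInv h a * Ediag h a) * quotA h a * (EdiagInv h a * Ediag h a) from by
    noncomm_ring]
  rw [EinvE ha, Matrix.one_mul, Matrix.mul_one]

lemma eigvec_transfer {μ : ℝ} {v : Fin (2 * h) → ℝ} (hv : Smat h a *ᵥ v = μ • v) :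
    quotA h a *ᵥ (EdiagInv h a *ᵥ v) = μ • (EdiagInv h a *ᵥ v) := by
  have key : quotA h a * EdiagInv h a = EdiagInv h a * Smat h a := by
    rw [quotA_conj ha,
      Matrix.mul_assoc (EdiagInv h a * Smat h a) (Ediag h a) (EdiagInv h a),
      EEinv ha, Matrix.mul_one]
  rw [Matrix.mulVec_mulVec, key, ← Matrix.mulVec_mulVec, hv, Matrix.mulVec_smul]

lemma Einv_mulVec_eq_zero {v : Fin (2 * h) → ℝ} (hv : EdiagInv h a *ᵥ v = 0) : v = 0 := by
  have : Ediag h a *ᵥ (EdiagInv h a *ᵥ v) = 0 := by rw [hv, Matrix.mulVec_zero]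
  rwa [Matrix.mulVec_mulVec, EEinv ha, Matrix.one_mulVec] at this

end Smat


theorem chain_spectrum
    (h : ℕ) (hh : 1 ≤ h) (a : Fin (2 * h) → ℕ) (ha : ∀ k, 1 ≤ a k) :
    (chainA h a).charpoly =
        X ^ ((∑ k, a k) - 2 * h) * (quotA h a).charpoly ∧
      Multiset.card (quotA h a).charpoly.roots = 2 * h ∧
      (quotA h a).charpoly.roots.Nodup ∧
      ∀ x ∈ (quotA h a).charpoly.roots, x ≠ 0 := by
  have hherm : (Smat h a).IsHermitian := Smat_herm ha
  set eig : Fin (2 * h) → ℝ := hherm.eigenvalues with heig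
  have hcp : (quotA h a).charpoly = ∏ i, (X - C (eig i)) := by
    rw [quotA_conj ha, my_charpoly_conj _ _ _ (EinvE ha), my_charpoly_hermitian _ hherm]
  have hroots : (quotA h a).charpoly.roots = Multiset.map eig Finset.univ.val := by
    rw [hcp, Finset.prod_eq_multiset_prod,
      show Multiset.map (fun i => (X : ℝ[X]) - C (eig i)) Finset.univ.val
        = Multiset.map (fun x => (X : ℝ[X]) - C x) (Multiset.map eig Finset.univ.val) from
        by rw [Multiset.map_map]; rfl,
      Polynomial.roots_multiset_prod_X_sub_C]
  -- eigenvector transfer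
  set v : Fin (2 * h) → (Fin (2 * h) → ℝ) := fun i k => hherm.eigenvectorBasis i k with hv
  set z : Fin (2 * h) → (Fin (2 * h) → ℝ) := fun i => EdiagInv h a *ᵥ v i with hzdef
  have hvec : ∀ i, quotA h a *ᵥ z i = eig i • z i :=
    fun i => eigvec_transfer ha (hherm.mulVec_eigenvectorBasis i)
  have hznz : ∀ i, z i ≠ 0 := by
    intro i hz0
    have hv0 : v i = 0 := Einv_mulVec_eq_zero ha hz0
    have hb : hherm.eigenvectorBasis i = 0 := (WithLp.ext_iff _).mpr (funext fun k => congrFun hv0 k)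
    exact hherm.eigenvectorBasis.orthonormal.ne_zero i hb
  have heignz : ∀ i, eig i ≠ 0 := by
    intro i h0
    have h1 := hvec i
    rw [h0] at h1
    exact hznz i (kernel0 ha h1)
  have hinj : Function.Injective eig := by
    intro i j hij
    by_contra hne
    have hzi := hvec i
    have hzj := hvec j
    rw [← hij] at hzj
    set idx0 : Fin (2 * h) := ⟨0, by omega⟩ with hidx0
    set c : ℝ := z j idx0
    set d : ℝ := z i idx0
    set w : Fin (2 * h) → ℝ := c • z i - d • z j with hwdef
    have hw : quotA h a *ᵥ w = eig i • w := by
      rw [hwdef, Matrix.mulVec_sub, Matrix.mulVec_smul, Matrix.mulVec_smul, hzi, hzj]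
      module
    have hw0 : w idx0 = 0 := by
      simp only [hwdef, Pi.sub_apply, Pi.smul_apply, smul_eq_mul]
      ring
    have hwz : w = 0 := kernel1 (heignz i) hw hh hw0
    have hzz : c • z i = d • z j := sub_eq_zero.mp hwz
    have hvv : c • v i = d • v j := by
      have h1 : Ediag h a *ᵥ (c • z i) = Ediag h a *ᵥ (d • z j) := by rw [hzz]
      have h2 : ∀ (e : ℝ) (i' : Fin (2 * h)), Ediag h a *ᵥ (e • z i') = e • v i' := by
        intro e i'
        rw [Matrix.mulVec_smul, hzdef, Matrix.mulVec_mulVec, EEinv ha, Matrix.one_mulVec]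
      rwa [h2, h2] at h1
    have hbb : c • hherm.eigenvectorBasis i = d • hherm.eigenvectorBasis j :=
      (WithLp.ext_iff _).mpr (funext fun k => congrFun hvv k)
    have hon := hherm.eigenvectorBasis.orthonormal
    have hc0 : c = 0 := by
      have h3 := congrArg (fun x : EuclideanSpace ℝ (Fin (2 * h)) =>
        (inner ℝ (hherm.eigenvectorBasis i) x : ℝ)) hbb
      simp only [inner_smul_right] at h3
      rw [real_inner_self_eq_norm_mul_norm, hon.1 i, hon.2 hne] at h3
      simpa using h3
    have hd0 : d = 0 := by
      rw [hc0, zero_smul] at hbb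
      rcases smul_eq_zero.mp hbb.symm with h4 | h4
      · exact h4
      · exact absurd h4 (hon.ne_zero j)
    have := kernel1 (heignz i) hzi hh hd0
    exact hznz i this
  refine ⟨part1 h a ha, ?_, ?_, ?_⟩
  · rw [hroots]
    simp
  · rw [hroots]
    exact Multiset.Nodup.map hinj Finset.univ.nodup
  · intro x hx
    rw [hroots] at hx
    obtain ⟨i, -, rfl⟩ := Multiset.mem_map.mp hx
    exact heignz i
end Factor
end

section
/- Let G be a chain graph with binary string 0^{a_1}1^{a_2}…0^{a_{2h-1}}1^{a_{2h}}. Then no eigenvalue of the adjacency matrix A(G) lies in the set [−1/2, 0) ∪ (0, 1/2]; that is, every nonzero adjacency eigenvalue λ of G satisfies |λ| > 1/2. -/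
open Matrix Polynomial

private lemma sum_range_two_mul' (f : ℕ → ℝ) (n : ℕ) :
    ∑ l ∈ Finset.range (2 * n), f l = ∑ j ∈ Finset.range n, (f (2 * j) + f (2 * j + 1)) := by
  induction n with
  | zero => simp
  | succ n ih =>
    have h2 : 2 * (n + 1) = (2 * n + 1) + 1 := by ring
    rw [h2, Finset.sum_range_succ, Finset.sum_range_succ, ih, Finset.sum_range_succ]
    ring

private lemma sum_ite_telescope (g : ℕ → ℝ) (i : ℕ) :
    ∀ n, i ≤ n →
      ∑ j ∈ Finset.range n, (if i ≤ j then g j - g (j + 1) else 0) = g i - g n := by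
  intro n
  induction n with
  | zero => intro hn; simp [Nat.le_zero.mp hn]
  | succ n ih =>
    intro hn
    rcases le_or_gt i n with hni | hni
    · rw [Finset.sum_range_succ, ih hni, if_pos hni]; ring
    · have hi : i = n + 1 := by omega
      subst hi
      rw [Finset.sum_range_succ, if_neg (by omega), add_zero, sub_self]
      exact Finset.sum_eq_zero fun j hj => if_neg (by rw [Finset.mem_range] at hj; omega)

theorem chain_eigenvalue_free_interval
    (h : ℕ) (hh : 1 ≤ h) (a : Fin (2 * h) → ℕ) (ha : ∀ k, 1 ≤ a k) :
    ∀ x ∈ (chainA h a).charpoly.roots, x ≠ 0 → (1 / 2 : ℝ) < |x| := by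
  classical
  intro x hx hx0
  by_contra hlt
  push_neg at hlt
  have hroot : ((chainA h a).charpoly).IsRoot x := Polynomial.isRoot_of_mem_roots hx
  have hdet : (x • (1 : Matrix (Σ k : Fin (2 * h), Fin (a k)) (Σ k : Fin (2 * h), Fin (a k)) ℝ)
      - chainA h a).det = 0 := by
    have hmap : (Matrix.charmatrix (chainA h a)).map (Polynomial.eval x)
        = x • 1 - chainA h a := by
      ext i j
      by_cases hij : i = j
      · subst hij
        simp [Matrix.charmatrix_apply, Matrix.map_apply, Matrix.one_apply, Matrix.diagonal_apply]
      · simp [Matrix.charmatrix_apply, Matrix.map_apply, Matrix.one_apply,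
          Matrix.diagonal_apply, hij]
    have hdet2 : (Polynomial.evalRingHom x) ((Matrix.charmatrix (chainA h a)).det)
        = ((Matrix.charmatrix (chainA h a)).map (Polynomial.eval x)).det := by
      rw [RingHom.map_det]; rfl
    rw [← hmap, ← hdet2]
    exact hroot
  obtain ⟨v, hv0, hv⟩ := Matrix.exists_mulVec_eq_zero_iff.mpr hdet
  have hAv : (chainA h a).mulVec v = x • v := by
    have h1 := hv
    rw [Matrix.sub_mulVec, Matrix.smul_mulVec, Matrix.one_mulVec, sub_eq_zero] at h1
    exact h1.symm
  have hvcell : ∀ u u' : (Σ k : Fin (2 * h), Fin (a k)), u.1 = u'.1 → v u = v u' := by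
    intro u u' he
    have h1 : (chainA h a).mulVec v u = (chainA h a).mulVec v u' := by
      simp only [Matrix.mulVec, dotProduct, chainA, SimpleGraph.adjMatrix_apply]
      refine Finset.sum_congr rfl fun w _ => ?_
      congr 1
      have hiff : (chainGraph h a).Adj u w ↔ (chainGraph h a).Adj u' w := by
        show cellAdj u.1 w.1 ↔ cellAdj u'.1 w.1
        rw [he]
      exact if_congr hiff rfl rfl
    have e1 := congrFun hAv u
    have e2 := congrFun hAv u'
    simp only [Pi.smul_apply, smul_eq_mul] at e1 e2
    apply mul_left_cancel₀ hx0
    rw [← e1, ← e2]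
    exact h1
  set c : ℕ → ℝ := fun k => if hk : k < 2 * h then v ⟨⟨k, hk⟩, ⟨0, ha ⟨k, hk⟩⟩⟩ else 0 with hc
  have hvc : ∀ u : (Σ k : Fin (2 * h), Fin (a k)), v u = c (u.1 : ℕ) := by
    intro u
    simp only [hc]
    rw [dif_pos u.1.isLt]
    exact hvcell u ⟨⟨u.1, u.1.isLt⟩, ⟨0, ha _⟩⟩ rfl
  set aa : ℕ → ℝ := fun l => if hl : l < 2 * h then (a ⟨l, hl⟩ : ℝ) else 0 with haa
  have heig : ∀ k : Fin (2 * h), x * c (k : ℕ) = ∑ l ∈ Finset.range (2 * h),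
      (if (Even (k : ℕ) ∧ Odd l ∧ (k : ℕ) < l) ∨ (Even l ∧ Odd (k : ℕ) ∧ l < (k : ℕ))
        then aa l * c l else 0) := by
    intro k
    have hck : c (k : ℕ) = v ⟨k, ⟨0, ha k⟩⟩ := by
      simp only [hc]
      rw [dif_pos k.isLt]
    have h1 : x * c (k : ℕ) = (chainA h a).mulVec v ⟨k, ⟨0, ha k⟩⟩ := by
      rw [hAv, hck]
      simp
    rw [h1]
    have h2 : (chainA h a).mulVec v ⟨k, ⟨0, ha k⟩⟩
        = ∑ u : (Σ k : Fin (2 * h), Fin (a k)),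
            (if cellAdj k u.1 then (1 : ℝ) else 0) * c (u.1 : ℕ) := by
      simp only [Matrix.mulVec, dotProduct, chainA, SimpleGraph.adjMatrix_apply]
      refine Finset.sum_congr rfl fun u _ => ?_
      rw [hvc u]
      rfl
    rw [h2, ← Finset.univ_sigma_univ, Finset.sum_sigma]
    have h3 : ∀ l : Fin (2 * h),
        (∑ _m : Fin (a l), (if cellAdj k l then (1 : ℝ) else 0) * c (l : ℕ))
        = (if (Even (k : ℕ) ∧ Odd (l : ℕ) ∧ (k : ℕ) < (l : ℕ))
              ∨ (Even (l : ℕ) ∧ Odd (k : ℕ) ∧ (l : ℕ) < (k : ℕ))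
            then aa (l : ℕ) * c (l : ℕ) else 0) := by
      intro l
      rw [Finset.sum_const, Finset.card_univ, Fintype.card_fin, nsmul_eq_mul]
      have haal : aa (l : ℕ) = (a l : ℝ) := by
        simp only [haa]
        rw [dif_pos l.isLt]
      by_cases hadj : cellAdj k l
      · have hadj' : (Even (k : ℕ) ∧ Odd (l : ℕ) ∧ (k : ℕ) < (l : ℕ))
            ∨ (Even (l : ℕ) ∧ Odd (k : ℕ) ∧ (l : ℕ) < (k : ℕ)) := hadj
        rw [if_pos hadj, if_pos hadj', haal]; ring
      · have hadj' : ¬((Even (k : ℕ) ∧ Odd (l : ℕ) ∧ (k : ℕ) < (l : ℕ))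
            ∨ (Even (l : ℕ) ∧ Odd (k : ℕ) ∧ (l : ℕ) < (k : ℕ))) := hadj
        rw [if_neg hadj, if_neg hadj']; ring
    rw [Finset.sum_congr rfl fun l _ => h3 l]
    exact Fin.sum_univ_eq_sum_range
      (fun l => if (Even (k : ℕ) ∧ Odd l ∧ (k : ℕ) < l) ∨ (Even l ∧ Odd (k : ℕ) ∧ l < (k : ℕ))
        then aa l * c l else 0) (2 * h)
  have hsh : c (2 * h) = 0 := by
    simp only [hc]
    rw [dif_neg (by omega)]
  have hW' : ∀ i : ℕ, x * c (2 * i) = ∑ j ∈ Finset.range h,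
      (if i ≤ j then aa (2 * j + 1) * c (2 * j + 1) else 0) := by
    intro i
    by_cases hi : i < h
    · have hk : x * c (2 * i) = ∑ l ∈ Finset.range (2 * h),
          (if (Even (2 * i) ∧ Odd l ∧ 2 * i < l) ∨ (Even l ∧ Odd (2 * i) ∧ l < 2 * i)
            then aa l * c l else 0) := heig ⟨2 * i, by omega⟩
      rw [hk, sum_range_two_mul' _ h]
      refine Finset.sum_congr rfl fun j hj => ?_
      rw [Finset.mem_range] at hj
      have e1 : (if (Even (2 * i) ∧ Odd (2 * j) ∧ 2 * i < 2 * j)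
            ∨ (Even (2 * j) ∧ Odd (2 * i) ∧ 2 * j < 2 * i)
          then aa (2 * j) * c (2 * j) else 0) = 0 := by
        rw [if_neg]
        rintro (⟨_, ho, _⟩ | ⟨_, ho, _⟩) <;> rw [Nat.odd_iff] at ho <;> omega
      have e2 : ((Even (2 * i) ∧ Odd (2 * j + 1) ∧ 2 * i < 2 * j + 1)
            ∨ (Even (2 * j + 1) ∧ Odd (2 * i) ∧ 2 * j + 1 < 2 * i)) ↔ i ≤ j := by
        constructor
        · rintro (⟨_, _, hlt'⟩ | ⟨he, _, _⟩)
          · omega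
          · exfalso; rw [Nat.even_iff] at he; omega
        · intro hij
          exact Or.inl ⟨⟨i, two_mul i⟩, ⟨j, rfl⟩, by omega⟩
      rw [e1, if_congr e2 rfl rfl, zero_add]
    · have hci : c (2 * i) = 0 := by
        simp only [hc]
        rw [dif_neg (by omega)]
      rw [hci, mul_zero]
      symm
      exact Finset.sum_eq_zero fun j hj => if_neg (by rw [Finset.mem_range] at hj; omega)
  have hB : ∀ j : ℕ, j < h → x * c (2 * j + 1) = ∑ i ∈ Finset.range h,
      (if i ≤ j then aa (2 * i) * c (2 * i) else 0) := by
    intro j hjh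
    have hk : x * c (2 * j + 1) = ∑ l ∈ Finset.range (2 * h),
        (if (Even (2 * j + 1) ∧ Odd l ∧ 2 * j + 1 < l)
            ∨ (Even l ∧ Odd (2 * j + 1) ∧ l < 2 * j + 1)
          then aa l * c l else 0) := heig ⟨2 * j + 1, by omega⟩
    rw [hk, sum_range_two_mul' _ h]
    refine Finset.sum_congr rfl fun i hi => ?_
    rw [Finset.mem_range] at hi
    have e1 : ((Even (2 * j + 1) ∧ Odd (2 * i) ∧ 2 * j + 1 < 2 * i)
          ∨ (Even (2 * i) ∧ Odd (2 * j + 1) ∧ 2 * i < 2 * j + 1)) ↔ i ≤ j := by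
      constructor
      · rintro (⟨he, _, _⟩ | ⟨_, _, hlt'⟩)
        · exfalso; rw [Nat.even_iff] at he; omega
        · omega
      · intro hij
        exact Or.inr ⟨⟨i, two_mul i⟩, ⟨j, rfl⟩, by omega⟩
    have e2 : (if (Even (2 * j + 1) ∧ Odd (2 * i + 1) ∧ 2 * j + 1 < 2 * i + 1)
          ∨ (Even (2 * i + 1) ∧ Odd (2 * j + 1) ∧ 2 * i + 1 < 2 * j + 1)
        then aa (2 * i + 1) * c (2 * i + 1) else 0) = 0 := by
      rw [if_neg]
      rintro (⟨he, _, _⟩ | ⟨he, _, _⟩) <;> rw [Nat.even_iff] at he <;> omega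
    rw [e2, if_congr e1 rfl rfl, add_zero]
  have hD : ∀ i, i < h →
      x * (c (2 * i) - c (2 * (i + 1))) = aa (2 * i + 1) * c (2 * i + 1) := by
    intro i hih
    have h2 : ∀ j ∈ Finset.range h,
        ((if i ≤ j then aa (2 * j + 1) * c (2 * j + 1) else 0)
          - (if i + 1 ≤ j then aa (2 * j + 1) * c (2 * j + 1) else 0))
        = (if j = i then aa (2 * j + 1) * c (2 * j + 1) else 0) := by
      intro j _
      by_cases hji : j = i
      · subst hji
        rw [if_pos (le_refl j), if_neg (by omega), if_pos rfl]
        ring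
      · rw [if_neg hji]
        by_cases hij : i ≤ j
        · rw [if_pos hij, if_pos (by omega)]; ring
        · rw [if_neg hij, if_neg (by omega)]; ring
    have h3 : x * (c (2 * i) - c (2 * (i + 1)))
        = ∑ j ∈ Finset.range h, (if j = i then aa (2 * j + 1) * c (2 * j + 1) else 0) := by
      rw [mul_sub, hW' i, hW' (i + 1), ← Finset.sum_sub_distrib, Finset.sum_congr rfl h2]
    rw [h3, Finset.sum_ite_eq' (Finset.range h) i (fun j => aa (2 * j + 1) * c (2 * j + 1)),
      if_pos (Finset.mem_range.mpr hih)]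
  have hbb : ∀ j, j < h → (1 : ℝ) ≤ aa (2 * j + 1) := by
    intro j hj
    simp only [haa]
    rw [dif_pos (by omega : 2 * j + 1 < 2 * h)]
    exact_mod_cast ha _
  have hww : ∀ i, i < h → (1 : ℝ) ≤ aa (2 * i) := by
    intro i hi
    simp only [haa]
    rw [dif_pos (by omega : 2 * i < 2 * h)]
    exact_mod_cast ha _
  have hI1 : ∑ j ∈ Finset.range h, aa (2 * j + 1) * c (2 * j + 1) ^ 2
      = ∑ i ∈ Finset.range h, aa (2 * i) * c (2 * i) ^ 2 := by
    have step1 : ∀ j ∈ Finset.range h, aa (2 * j + 1) * c (2 * j + 1) ^ 2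
        = (x * c (2 * j + 1)) * (c (2 * j) - c (2 * (j + 1))) := by
      intro j hj
      rw [Finset.mem_range] at hj
      calc aa (2 * j + 1) * c (2 * j + 1) ^ 2
          = (aa (2 * j + 1) * c (2 * j + 1)) * c (2 * j + 1) := by ring
        _ = (x * (c (2 * j) - c (2 * (j + 1)))) * c (2 * j + 1) := by rw [← hD j hj]
        _ = (x * c (2 * j + 1)) * (c (2 * j) - c (2 * (j + 1))) := by ring
    rw [Finset.sum_congr rfl step1]
    have step2 : ∀ j ∈ Finset.range h, (x * c (2 * j + 1)) * (c (2 * j) - c (2 * (j + 1)))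
        = ∑ i ∈ Finset.range h,
            (if i ≤ j then (aa (2 * i) * c (2 * i)) * (c (2 * j) - c (2 * (j + 1))) else 0) := by
      intro j hj
      rw [Finset.mem_range] at hj
      rw [hB j hj, Finset.sum_mul]
      exact Finset.sum_congr rfl fun i _ => by rw [ite_mul, zero_mul]
    rw [Finset.sum_congr rfl step2, Finset.sum_comm]
    refine Finset.sum_congr rfl fun i hi => ?_
    rw [Finset.mem_range] at hi
    have hre : (∑ j ∈ Finset.range h,
          if i ≤ j then (aa (2 * i) * c (2 * i)) * (c (2 * j) - c (2 * (j + 1))) else 0)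
        = (aa (2 * i) * c (2 * i))
            * ∑ j ∈ Finset.range h, (if i ≤ j then c (2 * j) - c (2 * (j + 1)) else 0) := by
      rw [Finset.mul_sum]
      exact Finset.sum_congr rfl fun j _ => by rw [mul_ite, mul_zero]
    rw [hre, sum_ite_telescope (fun j => c (2 * j)) i h (le_of_lt hi)]
    rw [hsh]
    ring
  have hI2 : x ^ 2 * (∑ j ∈ Finset.range h, (c (2 * j) - c (2 * (j + 1))) ^ 2 / aa (2 * j + 1))
      = ∑ i ∈ Finset.range h, aa (2 * i) * c (2 * i) ^ 2 := by
    rw [Finset.mul_sum, ← hI1]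
    refine Finset.sum_congr rfl fun j hj => ?_
    rw [Finset.mem_range] at hj
    have hb := hbb j hj
    have hbne : aa (2 * j + 1) ≠ 0 := by linarith
    have hstep : x ^ 2 * ((c (2 * j) - c (2 * (j + 1))) ^ 2 / aa (2 * j + 1))
        = (x * (c (2 * j) - c (2 * (j + 1)))) ^ 2 / aa (2 * j + 1) := by ring
    rw [hstep, hD j hj, div_eq_iff hbne]
    ring
  have hshift : ∑ j ∈ Finset.range h, c (2 * (j + 1)) ^ 2
      = (∑ i ∈ Finset.range h, c (2 * i) ^ 2) - c (2 * 0) ^ 2 := by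
    have h1 := Finset.sum_range_succ' (fun j => c (2 * j) ^ 2) h
    have h2 := Finset.sum_range_succ (fun j => c (2 * j) ^ 2) h
    rw [h2, hsh] at h1
    linarith [h1]
  have hsum_sub : ∑ j ∈ Finset.range h, (c (2 * j) - c (2 * (j + 1))) ^ 2
      = 4 * (∑ i ∈ Finset.range h, c (2 * i) ^ 2)
        - (2 * c (2 * 0) ^ 2 + ∑ j ∈ Finset.range h, (c (2 * j) + c (2 * (j + 1))) ^ 2) := by
    have h1 : ∀ j ∈ Finset.range h, (c (2 * j) - c (2 * (j + 1))) ^ 2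
        = (2 * c (2 * j) ^ 2 + 2 * c (2 * (j + 1)) ^ 2)
            - (c (2 * j) + c (2 * (j + 1))) ^ 2 := by
      intro j _; ring
    rw [Finset.sum_congr rfl h1, Finset.sum_sub_distrib, Finset.sum_add_distrib,
      ← Finset.mul_sum, ← Finset.mul_sum, hshift]
    ring
  have hE1 : (∑ j ∈ Finset.range h, (c (2 * j) - c (2 * (j + 1))) ^ 2 / aa (2 * j + 1))
      ≤ ∑ j ∈ Finset.range h, (c (2 * j) - c (2 * (j + 1))) ^ 2 := by
    refine Finset.sum_le_sum fun j hj => ?_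
    rw [Finset.mem_range] at hj
    exact div_le_self (sq_nonneg _) (hbb j hj)
  have hE0 : 0 ≤ ∑ j ∈ Finset.range h, (c (2 * j) - c (2 * (j + 1))) ^ 2 / aa (2 * j + 1) :=
    Finset.sum_nonneg fun j hj =>
      div_nonneg (sq_nonneg _) (by linarith [hbb j (Finset.mem_range.mp hj)])
  have hNW : (∑ i ∈ Finset.range h, c (2 * i) ^ 2)
      ≤ ∑ i ∈ Finset.range h, aa (2 * i) * c (2 * i) ^ 2 :=
    Finset.sum_le_sum fun i hi =>
      le_mul_of_one_le_left (sq_nonneg _) (hww i (Finset.mem_range.mp hi))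
  have hx2 : x ^ 2 ≤ 1 / 4 := by nlinarith [sq_abs x, abs_nonneg x, hlt]
  have hmul : x ^ 2 * (∑ j ∈ Finset.range h, (c (2 * j) - c (2 * (j + 1))) ^ 2 / aa (2 * j + 1))
      ≤ (1 / 4) * (∑ j ∈ Finset.range h, (c (2 * j) - c (2 * (j + 1))) ^ 2 / aa (2 * j + 1)) :=
    mul_le_mul_of_nonneg_right hx2 hE0
  have hcomb : 2 * c (2 * 0) ^ 2 + (∑ j ∈ Finset.range h, (c (2 * j) + c (2 * (j + 1))) ^ 2)
      ≤ 0 := by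
    linarith [hI2, hmul, hE1, hsum_sub, hNW]
  have hΔ0s : (0 : ℝ) ≤ ∑ j ∈ Finset.range h, (c (2 * j) + c (2 * (j + 1))) ^ 2 :=
    Finset.sum_nonneg fun j _ => sq_nonneg _
  have hc0 : c (2 * 0) = 0 := by nlinarith [hcomb, hΔ0s, sq_nonneg (c (2 * 0))]
  have hsum0 : ∑ j ∈ Finset.range h, (c (2 * j) + c (2 * (j + 1))) ^ 2 = 0 := by
    nlinarith [hcomb, sq_nonneg (c (2 * 0))]
  have hpair : ∀ j ∈ Finset.range h, (c (2 * j) + c (2 * (j + 1))) ^ 2 = 0 :=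
    (Finset.sum_eq_zero_iff_of_nonneg fun j _ => sq_nonneg _).mp hsum0
  have hszero : ∀ i, i ≤ h → c (2 * i) = 0 := by
    intro i
    induction i with
    | zero => intro _; exact hc0
    | succ i ih =>
      intro hih
      have hsq0 := hpair i (Finset.mem_range.mpr (by omega))
      have hci := ih (by omega)
      have hz : c (2 * i) + c (2 * (i + 1)) = 0 := by
        have := sq_eq_zero_iff.mp hsq0
        exact this
      linarith
  have htzero : ∀ j, j < h → c (2 * j + 1) = 0 := by
    intro j hj
    have h1 := hB j hj
    have h2 : ∑ i ∈ Finset.range h, (if i ≤ j then aa (2 * i) * c (2 * i) else 0) = 0 :=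
      Finset.sum_eq_zero fun i hi => by
        simp [hszero i (le_of_lt (Finset.mem_range.mp hi))]
    rw [h2] at h1
    exact (mul_eq_zero.mp h1).resolve_left hx0
  refine hv0 (funext fun u => ?_)
  show v u = (0 : ℝ)
  rw [hvc u]
  have hu2 : (u.1 : ℕ) < 2 * h := u.1.isLt
  rcases Nat.even_or_odd (u.1 : ℕ) with he | ho
  · obtain ⟨r, hr⟩ := he
    have hru : (u.1 : ℕ) = 2 * r := by omega
    rw [hru]
    exact hszero r (by omega)
  · obtain ⟨r, hr⟩ := ho
    rw [hr]
    exact htzero r (by omega)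
end

section
/- Let a_1, a_2, a_3, a_4 be positive integers with a_1 ≠ a_2 and a_1 ≠ a_3. Let G be the chain graph with binary string 0^{a_1}1^{a_2}0^{a_3}1^{a_4} and let H be the chain graph with binary string 0^{a_2}1^{a_1}0^{a_4}1^{a_3}. Then G and H are not isomorphic as graphs. -/
open Matrix Polynomial

open Finset in
lemma iso_degree_eq' {V W : Type*} [Fintype V] [Fintype W]
    {G : SimpleGraph V} {H : SimpleGraph W}
    [DecidableRel G.Adj] [DecidableRel H.Adj] (φ : G ≃g H) (v : V) :
    H.degree (φ v) = G.degree v := by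
  rw [← SimpleGraph.card_neighborSet_eq_degree, ← SimpleGraph.card_neighborSet_eq_degree]
  exact (Fintype.card_congr (φ.mapNeighborSet v)).symm

open Finset in
lemma iso_degcount_eq' {V W : Type*} [Fintype V] [Fintype W] [DecidableEq V] [DecidableEq W]
    {G : SimpleGraph V} {H : SimpleGraph W}
    [DecidableRel G.Adj] [DecidableRel H.Adj] (φ : G ≃g H) (d : ℕ) :
    (univ.filter fun v => G.degree v = d).card
      = (univ.filter fun w => H.degree w = d).card := by
  apply Finset.card_bij (fun v _ => φ v)
  · intro v hv
    simp only [mem_filter, mem_univ, true_and] at *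
    rw [iso_degree_eq' φ v]; exact hv
  · intro u _ v _ h; exact φ.injective h
  · intro w hw
    refine ⟨φ.symm w, ?_, by simp⟩
    simp only [mem_filter, mem_univ, true_and] at *
    have h2 := iso_degree_eq' φ (φ.symm w)
    rw [RelIso.apply_symm_apply] at h2
    rw [← h2]; exact hw

open Finset in
lemma iso_degsum_eq' {V W : Type*} [Fintype V] [Fintype W]
    {G : SimpleGraph V} {H : SimpleGraph W}
    [DecidableRel G.Adj] [DecidableRel H.Adj] (φ : G ≃g H) :
    ∑ v, G.degree v = ∑ w, H.degree w := by
  rw [← Equiv.sum_comp φ.toEquiv (fun w => H.degree w)]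
  exact Finset.sum_congr rfl fun v _ => (iso_degree_eq' φ v).symm

open Finset in
lemma sigma_filter_card' {m : ℕ} (a : Fin m → ℕ) (P : Fin m → Prop) [DecidablePred P] :
    (Finset.univ.filter (fun u : Σ k : Fin m, Fin (a k) => P u.1)).card
      = ∑ k, if P k then a k else 0 := by
  rw [Finset.card_filter, ← Finset.univ_sigma_univ, Finset.sum_sigma]
  simp [apply_ite Finset.card]

open Finset in
lemma sigma_sum' {m : ℕ} (a : Fin m → ℕ) (f : Fin m → ℕ) :
    (∑ v : Σ k : Fin m, Fin (a k), f v.1) = ∑ k, a k * f k := by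
  rw [← Finset.univ_sigma_univ, Finset.sum_sigma]
  simp [mul_comm]

open Finset in
lemma chain_degree' (h : ℕ) (a : Fin (2*h) → ℕ) (v : Σ k : Fin (2*h), Fin (a k)) :
    (chainGraph h a).degree v = ∑ l, if cellAdj v.1 l then a l else 0 := by
  have hnf : (chainGraph h a).neighborFinset v
      = univ.filter (fun u : Σ k : Fin (2*h), Fin (a k) => cellAdj v.1 u.1) := by
    ext u
    rw [SimpleGraph.mem_neighborFinset]
    simp [chainGraph]
  rw [SimpleGraph.degree, hnf, sigma_filter_card']

open Finset in
lemma chain_degcount' (h : ℕ) (a : Fin (2*h) → ℕ) (d : ℕ) :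
    (univ.filter fun v : Σ k : Fin (2*h), Fin (a k) => (chainGraph h a).degree v = d).card
      = ∑ k, if (∑ l, if cellAdj k l then a l else 0) = d then a k else 0 := by
  have hfe : (univ.filter fun v : Σ k : Fin (2*h), Fin (a k) => (chainGraph h a).degree v = d)
      = univ.filter (fun v : Σ k : Fin (2*h), Fin (a k) =>
          (∑ l, if cellAdj v.1 l then a l else 0) = d) := by
    apply Finset.filter_congr
    intro v _
    rw [chain_degree']
  rw [hfe, sigma_filter_card' a (fun k => (∑ l, if cellAdj k l then a l else 0) = d)]

open Finset in
lemma chain_degsum' (h : ℕ) (a : Fin (2*h) → ℕ) :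
    (∑ v : Σ k : Fin (2*h), Fin (a k), (chainGraph h a).degree v)
      = ∑ k, a k * (∑ l, if cellAdj k l then a l else 0) := by
  rw [← sigma_sum' a (fun k => ∑ l, if cellAdj k l then a l else 0)]
  exact Finset.sum_congr rfl fun v _ => chain_degree' h a v
set_option maxHeartbeats 1000000 in
theorem chain_h_two_nonisomorphic
    (a1 a2 a3 a4 : ℕ) (h1 : 0 < a1) (h2 : 0 < a2) (h3 : 0 < a3) (h4 : 0 < a4)
    (h12 : a1 ≠ a2) (h13 : a1 ≠ a3) :
    IsEmpty (chainGraph 2 ![a1, a2, a3, a4] ≃g chainGraph 2 ![a2, a1, a4, a3]) := by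
  constructor
  intro φ
  have hda : ∀ k : Fin (2*2), (∑ l, if cellAdj k l then ![a1,a2,a3,a4] l else 0)
      = ![a2+a4, a1, a4, a1+a3] k := by
    intro k
    rw [Fin.sum_univ_four]
    fin_cases k <;> simp +decide [cellAdj, show ((3:Fin (2*2)):ℕ)=3 from rfl]
  have hdb : ∀ k : Fin (2*2), (∑ l, if cellAdj k l then ![a2,a1,a4,a3] l else 0)
      = ![a1+a3, a2, a3, a2+a4] k := by
    intro k
    rw [Fin.sum_univ_four]
    fin_cases k <;> simp +decide [cellAdj, show ((3:Fin (2*2)):ℕ)=3 from rfl]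
  have F1 : ∀ d : ℕ,
      ((if a2 + a4 = d then a1 else 0) + (if a1 = d then a2 else 0)
        + (if a4 = d then a3 else 0) + (if a1 + a3 = d then a4 else 0))
      = ((if a1 + a3 = d then a2 else 0) + (if a2 = d then a1 else 0)
        + (if a3 = d then a4 else 0) + (if a2 + a4 = d then a3 else 0)) := by
    intro d
    have C := iso_degcount_eq' φ d
    rw [chain_degcount', chain_degcount'] at C
    simp only [hda, hdb] at C
    rw [Fin.sum_univ_four, Fin.sum_univ_four] at C
    simp at C
    convert C <;> exact if_congr Iff.rfl rfl rfl
  have F2 : a1 * (a2 + a4) + a2 * a1 + a3 * a4 + a4 * (a1 + a3)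
      = a2 * (a1 + a3) + a1 * a2 + a4 * a3 + a3 * (a2 + a4) := by
    have S := iso_degsum_eq' φ
    rw [chain_degsum', chain_degsum'] at S
    simp only [hda, hdb] at S
    rw [Fin.sum_univ_four, Fin.sum_univ_four] at S
    simpa using S
  rcases Nat.lt_trichotomy (a1 + a3) (a2 + a4) with hlt | heq | hgt
  · have FA := F1 (a2 + a4)
    split_ifs at FA <;> omega
  · have FA := F1 (a2 + a4)
    split_ifs at FA <;> omega
  · have FA := F1 (a1 + a3)
    have h24 : a2 = a4 := by split_ifs at FA <;> omega
    subst h24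
    have : a1 * a2 = a3 * a2 := by nlinarith [F2]
    have := Nat.eq_of_mul_eq_mul_right h2 this
    exact h13 this
end

section
/- Let G be a connected simple graph on n vertices and let W ⊆ V(G) be an independent set of size l with 2 ≤ l ≤ n such that all vertices of W have the same neighborhood, i.e. N(u) = N(v) for all u, v ∈ W. Then −1 is an eigenvalue of the Seidel matrix S(G) with multiplicity at least l − 1 (i.e. the eigenspace of S(G) for the eigenvalue −1 has dimension at least l − 1). -/
open Matrix Polynomial

theorem seidel_duplicate_independent_set_eigenvalue
    {V : Type*} [Fintype V] [DecidableEq V] (G : SimpleGraph V) [DecidableRel G.Adj]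
    (hconn : G.Connected) (W : Finset V) (hl : 2 ≤ W.card)
    (hind : ∀ u ∈ W, ∀ v ∈ W, ¬ G.Adj u v)
    (hdup : ∀ u ∈ W, ∀ v ∈ W, G.neighborSet u = G.neighborSet v) :
    W.card - 1 ≤
      Module.finrank ℝ (Module.End.eigenspace (Matrix.toLin' (seidel G)) (-1)) := by
  classical
  obtain ⟨v0, hv0⟩ := Finset.card_pos.mp (by omega : 0 < W.card)
  set s : Finset V := W.erase v0 with hs
  have hscard : s.card = W.card - 1 := Finset.card_erase_of_mem hv0
  set E := Module.End.eigenspace (Matrix.toLin' (seidel G)) (-1) with hE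
  set b : s → (V → ℝ) := fun u => Pi.single (u : V) 1 - Pi.single v0 1 with hb
  have hmem : ∀ u : s, b u ∈ E := by
    intro u
    have hu : (u : V) ∈ W := Finset.mem_of_mem_erase u.2
    rw [hE, Module.End.mem_eigenspace_iff, Matrix.toLin'_apply]
    have hadj : ∀ w : V, G.Adj w u ↔ G.Adj w v0 := by
      intro w
      have h := hdup u hu v0 hv0
      constructor <;> intro h'
      · have : w ∈ G.neighborSet (u : V) := h'.symm
        rw [h] at this
        exact this.symm
      · have : w ∈ G.neighborSet v0 := h'.symm
        rw [← h] at this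
        exact this.symm
    funext w
    have hmv : ∀ j : V, (seidel G).mulVec (Pi.single j 1) w = seidel G w j := by
      intro j
      simp [Matrix.mulVec, dotProduct, Pi.single_apply, mul_ite]
    have : (seidel G).mulVec (b u) w
        = (seidel G).mulVec (Pi.single (u : V) 1) w
          - (seidel G).mulVec (Pi.single v0 1) w := by
      rw [hb]; simp [Matrix.mulVec_sub]
    rw [this, hmv, hmv]
    have hA : (G.adjMatrix ℝ) w u = (G.adjMatrix ℝ) w v0 := by
      simp [SimpleGraph.adjMatrix, hadj w]
    simp only [seidel, Matrix.sub_apply, Matrix.smul_apply, Matrix.of_apply,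
      Matrix.one_apply, hb, Pi.smul_apply, Pi.sub_apply, Pi.single_apply, smul_eq_mul]
    rw [hA]
    by_cases h1 : w = (u : V) <;> by_cases h2 : w = v0 <;> simp [h1, h2] <;> ring
  have hli : LinearIndependent ℝ b := by
    rw [Fintype.linearIndependent_iff]
    intro c hc i
    have hiW : (i : V) ∈ s := i.2
    have hine : (i : V) ≠ v0 := Finset.ne_of_mem_erase i.2
    have h := congrFun hc (i : V)
    simp only [Finset.sum_apply, Pi.smul_apply, hb, Pi.sub_apply, Pi.single_apply,
      smul_eq_mul, Pi.zero_apply, if_neg hine, sub_zero] at h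
    rw [Finset.sum_eq_single i] at h
    · simpa using h
    · intro j _ hji
      have : (i : V) ≠ (j : V) := fun hij => hji (Subtype.ext hij.symm)
      simp [this]
    · intro hni; exact absurd (Finset.mem_univ i) hni
  have hspan : Submodule.span ℝ (Set.range b) ≤ E :=
    Submodule.span_le.mpr (by rintro _ ⟨u, rfl⟩; exact hmem u)
  have h1 : Module.finrank ℝ (Submodule.span ℝ (Set.range b)) = s.card := by
    rw [finrank_span_eq_card hli, Fintype.card_coe]
  calc W.card - 1 = s.card := hscard.symm
    _ = Module.finrank ℝ (Submodule.span ℝ (Set.range b)) := h1.symm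
    _ ≤ Module.finrank ℝ E := Submodule.finrank_mono hspan
end

section
/- Let G be a chain graph with binary string 0^{a_1}1^{a_2}…0^{a_{2h-1}}1^{a_{2h}} on n = a_1 + ⋯ + a_{2h} vertices. Then −1 is an eigenvalue of the Seidel matrix S(G) with multiplicity at least n − 2h (i.e. the eigenspace of S(G) for the eigenvalue −1 has dimension at least n − 2h). -/
open Matrix Polynomial

theorem chain_seidel_minus_one_multiplicity
    (h : ℕ) (hh : 1 ≤ h) (a : Fin (2 * h) → ℕ) (ha : ∀ k, 1 ≤ a k) :
    (∑ k, a k) - 2 * h ≤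
      Module.finrank ℝ (Module.End.eigenspace (Matrix.toLin' (chainS h a)) (-1)) := by
  
  classical
  set V := (Σ k : Fin (2 * h), Fin (a k)) with hV
  let T : (V → ℝ) →ₗ[ℝ] (Fin (2 * h) → ℝ) :=
    { toFun := fun x k => ∑ i, x ⟨k, i⟩
      map_add' := by intro x y; funext k; simp [Finset.sum_add_distrib]
      map_smul' := by intro c x; funext k; simp [Finset.mul_sum] }
  have hker : LinearMap.ker T ≤
      Module.End.eigenspace (Matrix.toLin' (chainS h a)) (-1) := by
    intro x hx
    have hx' : ∀ k, ∑ i, x ⟨k, i⟩ = 0 := fun k => congrFun (LinearMap.mem_ker.mp hx) k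
    rw [Module.End.mem_eigenspace_iff, Matrix.toLin'_apply]
    funext u
    have hsum : ∑ v : V, x v = 0 := by
      rw [← Finset.univ_sigma_univ, Finset.sum_sigma]
      exact Finset.sum_eq_zero fun k _ => hx' k
    have hadj : ∑ v : V, (if cellAdj u.1 v.1 then (1:ℝ) else 0) * x v = 0 := by
      rw [← Finset.univ_sigma_univ, Finset.sum_sigma]
      refine Finset.sum_eq_zero fun k _ => ?_
      by_cases hc : cellAdj u.1 k
      · simp [hc, hx' k]
      · simp [hc]
    have : (chainS h a).mulVec x u = ∑ v : V, (chainS h a) u v * x v := rfl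
    rw [this]
    have hentry : ∀ v : V, (chainS h a) u v
        = 1 - (if u = v then (1:ℝ) else 0) - 2 * (if cellAdj u.1 v.1 then (1:ℝ) else 0) := by
      intro v
      simp [chainS, seidel, Matrix.sub_apply, Matrix.one_apply, Matrix.smul_apply,
        SimpleGraph.adjMatrix_apply, chainGraph]
      change 2 * (if cellAdj u.1 v.1 then (1:ℝ) else 0) = _
      by_cases hc : cellAdj u.1 v.1 <;> simp [hc]
    calc ∑ v : V, (chainS h a) u v * x v
        = ∑ v : V, ((1:ℝ) * x v - (if u = v then (1:ℝ) else 0) * x v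
            - 2 * ((if cellAdj u.1 v.1 then (1:ℝ) else 0) * x v)) := by
          refine Finset.sum_congr rfl fun v _ => ?_
          rw [hentry v]; ring
      _ = (∑ v : V, x v) - x u - 2 * (∑ v : V, (if cellAdj u.1 v.1 then (1:ℝ) else 0) * x v) := by
          have h2 : ∑ v : V, (if u = v then (1:ℝ) else 0) * x v = x u := by
            simp only [ite_mul, one_mul, zero_mul]
            convert Finset.sum_ite_eq Finset.univ u x <;> simp
          simp only [Finset.sum_sub_distrib, ← Finset.mul_sum, one_mul]
          rw [h2]
      _ = -x u := by rw [hsum, hadj]; ring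
      _ = ((-1 : ℝ) • x) u := by simp
  have hmono := Submodule.finrank_mono hker
  have hrn := LinearMap.finrank_range_add_finrank_ker T
  have hdom : Module.finrank ℝ (V → ℝ) = ∑ k, a k := by
    rw [Module.finrank_fintype_fun_eq_card]
    show Fintype.card ((k : Fin (2 * h)) × Fin (a k)) = _
    simp [Fintype.card_sigma]
  have hrange : Module.finrank ℝ (LinearMap.range T) ≤ 2 * h := by
    have := Submodule.finrank_le (LinearMap.range T)
    simpa [Module.finrank_fintype_fun_eq_card] using this
  exact le_trans (by omega) hmono
end

section
/- Let G be a chain graph with binary string 0^{a_1}1^{a_2}…0^{a_{2h-1}}1^{a_{2h}} on n = a_1 + ⋯ + a_{2h} vertices. Then the characteristic polynomial of the Seidel matrix S(G) satisfies P(S(G), x) = (x + 1)^{n−2h} · P(S̃(G), x), where P(S̃(G), x) is the characteristic polynomial of the 2h×2h quotient Seidel matrix S̃(G). -/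
open Matrix Polynomial

section aux
variable {R : Type*} [CommRing R] {p q : Type*} [Fintype p] [Fintype q]
  [DecidableEq p] [DecidableEq q]

lemma charpoly_eq_det' (M : Matrix p p R) :
    M.charpoly = (Matrix.scalar p (X : R[X]) - M.map C).det := rfl

lemma pow_mul_charpoly_mul (A : Matrix p q R) (B : Matrix q p R) :
    X ^ (Fintype.card q) * (A * B).charpoly = X ^ (Fintype.card p) * (B * A).charpoly := by
  set Ap : Matrix p q R[X] := A.map C with hAp
  set Bp : Matrix q p R[X] := B.map C with hBp
  set U : Matrix (p ⊕ q) (p ⊕ q) R[X] :=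
    fromBlocks ((X : R[X]) • (1 : Matrix p p R[X])) Ap Bp 1 with hU
  set V : Matrix (p ⊕ q) (p ⊕ q) R[X] :=
    fromBlocks 1 Ap Bp ((X : R[X]) • (1 : Matrix q q R[X])) with hV
  have hABmap : (A * B).map C = Ap * Bp := by
    simp [hAp, hBp, Matrix.map_mul]
  have hBAmap : (B * A).map C = Bp * Ap := by
    simp [hAp, hBp, Matrix.map_mul]
  have hUdet : U.det = (A * B).charpoly := by
    have : U * fromBlocks 1 0 (-Bp) 1 =
        fromBlocks ((X : R[X]) • (1 : Matrix p p R[X]) - Ap * Bp) Ap 0 1 := by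
      rw [hU, Matrix.fromBlocks_multiply]
      congr 1 <;> simp [Matrix.mul_neg, sub_eq_add_neg]
    have hdet := congrArg Matrix.det this
    rw [Matrix.det_mul, Matrix.det_fromBlocks_zero₁₂, Matrix.det_fromBlocks_zero₂₁] at hdet
    simp only [Matrix.det_one, mul_one, one_mul] at hdet
    rw [hdet, charpoly_eq_det', hABmap, Matrix.scalar_apply, ← Matrix.smul_one_eq_diagonal]
  have hVdet : V.det = (B * A).charpoly := by
    have : fromBlocks 1 0 (-Bp) 1 * V =
        fromBlocks 1 Ap 0 ((X : R[X]) • (1 : Matrix q q R[X]) - Bp * Ap) := by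
      rw [hV, Matrix.fromBlocks_multiply]
      congr 1 <;> simp [Matrix.neg_mul, sub_eq_add_neg, add_comm]
    have hdet := congrArg Matrix.det this
    rw [Matrix.det_mul, Matrix.det_fromBlocks_zero₁₂, Matrix.det_fromBlocks_zero₂₁] at hdet
    simp only [Matrix.det_one, mul_one, one_mul] at hdet
    rw [hdet, charpoly_eq_det', hBAmap, Matrix.scalar_apply, ← Matrix.smul_one_eq_diagonal]
  have key : fromBlocks (1 : Matrix p p R[X]) 0 0 ((X : R[X]) • (1 : Matrix q q R[X])) * U =
      V * fromBlocks ((X : R[X]) • (1 : Matrix p p R[X])) 0 0 1 := by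
    rw [hU, hV, Matrix.fromBlocks_multiply, Matrix.fromBlocks_multiply]
    congr 1 <;> simp [Matrix.smul_mul, Matrix.mul_smul]
  have hdet := congrArg Matrix.det key
  rw [Matrix.det_mul, Matrix.det_mul, Matrix.det_fromBlocks_zero₁₂,
    Matrix.det_fromBlocks_zero₁₂] at hdet
  simp only [Matrix.det_one, mul_one, one_mul, Matrix.det_smul, Matrix.det_one,
    smul_eq_mul] at hdet
  rw [hUdet, hVdet] at hdet
  calc X ^ Fintype.card q * (A * B).charpoly = _ := hdet
  _ = X ^ Fintype.card p * (B * A).charpoly := by ring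

lemma charpoly_sub_one_eq (M : Matrix p p R) :
    (M - 1).charpoly = (aeval (X + 1 : R[X])) M.charpoly := by
  have hdet : (aeval (X + 1 : R[X])) M.charpoly =
      ((charmatrix M).map (aeval (X + 1 : R[X]))).det := by
    rw [Matrix.charpoly, AlgHom.map_det, AlgHom.mapMatrix_apply]
  rw [hdet, Matrix.charpoly]
  congr 1
  ext i j
  by_cases hij : i = j
  · subst hij
    simp [charmatrix_apply_eq, Matrix.sub_apply, Matrix.one_apply, map_sub, aeval_X, aeval_C]
    ring
  · simp [charmatrix_apply_ne _ _ _ hij, Matrix.sub_apply, Matrix.one_apply_ne hij, aeval_C]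
end aux

section main
variable (h : ℕ) (a : Fin (2 * h) → ℕ)

/-- left factor: n × m -/
noncomputable def Emat : Matrix (Σ k : Fin (2 * h), Fin (a k)) (Fin (2 * h)) ℝ :=
  Matrix.of fun u l => if u.1 = l then 1 else 0

/-- sign matrix of cell adjacency times transpose inclusion: m × n -/
noncomputable def Fmat : Matrix (Fin (2 * h)) (Σ k : Fin (2 * h), Fin (a k)) ℝ :=
  Matrix.of fun k u => if cellAdj k u.1 then -1 else 1

lemma chainS_eq : chainS h a = Emat h a * Fmat h a - 1 := by
  ext u v
  have hmul : (Emat h a * Fmat h a) u v = if cellAdj u.1 v.1 then -1 else 1 := by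
    rw [Matrix.mul_apply]
    rw [Finset.sum_eq_single u.1]
    · simp [Emat, Fmat]
    · intro l _ hl
      simp [Emat, Fmat, Ne.symm hl, hl]
    · simp
  have hS : chainS h a u v =
      1 - (if u = v then (1:ℝ) else 0) - 2 * (if cellAdj u.1 v.1 then (1:ℝ) else 0) := by
    simp [chainS, seidel, Matrix.sub_apply, Matrix.one_apply, Matrix.smul_apply,
      SimpleGraph.adjMatrix_apply, chainGraph]
    change 2 * (if cellAdj u.1 v.1 then (1:ℝ) else 0) = _
    split_ifs <;> norm_num
  rw [Matrix.sub_apply, hmul, hS, Matrix.one_apply]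
  by_cases huv : u = v
  · subst huv
    have : ¬ cellAdj u.1 u.1 := by
      rintro (⟨_, _, hlt⟩ | ⟨_, _, hlt⟩) <;> exact lt_irrefl _ hlt
    simp [this]
  · by_cases hc : cellAdj u.1 v.1 <;> simp [huv, hc] <;> ring

lemma quotS_eq : quotS h a = Fmat h a * Emat h a - 1 := by
  ext k l
  have hmul : (Fmat h a * Emat h a) k l =
      (a l : ℝ) * (if cellAdj k l then -1 else 1) := by
    rw [Matrix.mul_apply]
    rw [← Finset.univ_sigma_univ, Finset.sum_sigma]
    rw [Finset.sum_eq_single l]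
    · simp [Emat, Fmat, Finset.sum_ite_eq, mul_comm]
    · intro m _ hm
      simp [Emat, Fmat, hm]
    · simp
  rw [Matrix.sub_apply, hmul, Matrix.one_apply]
  by_cases hkl : k = l
  · subst hkl
    have : ¬ cellAdj k k := by
      rintro (⟨_, _, hlt⟩ | ⟨_, _, hlt⟩) <;> exact lt_irrefl _ hlt
    simp [quotS, this]
  · by_cases hc : cellAdj k l <;> simp [quotS, hkl, hc] <;> ring

theorem chain_seidel_charpoly_factorization
    (h : ℕ) (hh : 1 ≤ h) (a : Fin (2 * h) → ℕ) (ha : ∀ k, 1 ≤ a k) :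
    (chainS h a).charpoly = (X + 1) ^ ((∑ k, a k) - 2 * h) * (quotS h a).charpoly := by
  have hcards : Fintype.card (Σ k : Fin (2 * h), Fin (a k)) = ∑ k, a k := by
    simp [Fintype.card_sigma]
  have hcardf : Fintype.card (Fin (2 * h)) = 2 * h := Fintype.card_fin _
  have hge : 2 * h ≤ ∑ k, a k := by
    calc 2 * h = ∑ _k : Fin (2 * h), 1 := by simp
    _ ≤ ∑ k, a k := Finset.sum_le_sum fun k _ => ha k
  have key := pow_mul_charpoly_mul (Emat h a) (Fmat h a)
  rw [hcards, hcardf] at key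
  have hXpow : (X : ℝ[X]) ^ (∑ k, a k) =
      X ^ ((∑ k, a k) - 2 * h) * X ^ (2 * h) := by
    rw [← pow_add, Nat.sub_add_cancel hge]
  rw [hXpow, mul_assoc] at key
  have hcancel : (Emat h a * Fmat h a).charpoly =
      X ^ ((∑ k, a k) - 2 * h) * (Fmat h a * Emat h a).charpoly := by
    have hX : (X : ℝ[X]) ^ (2 * h) ≠ 0 := pow_ne_zero _ X_ne_zero
    exact mul_left_cancel₀ hX (by rw [key]; ring)
  rw [chainS_eq, quotS_eq, charpoly_sub_one_eq, charpoly_sub_one_eq, hcancel]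
  rw [_root_.map_mul, map_pow, aeval_X]
end main
end

section
/- Let G be a chain graph with binary string 0^{a_1}1^{a_2}…0^{a_{2h-1}}1^{a_{2h}} and let S̃(G) be its 2h×2h quotient Seidel matrix. Then −1 is a simple eigenvalue of S̃(G); equivalently, det(S̃(G) + I) = 0 and rank(S̃(G) + I) = 2h − 1. -/
open Matrix Polynomial

namespace ChainAux

lemma cellAdj_iff {m : ℕ} (k l : Fin m) :
    cellAdj k l ↔ ((k : ℕ) % 2 = 0 ∧ (l : ℕ) % 2 = 1 ∧ (k : ℕ) < l) ∨
      ((l : ℕ) % 2 = 0 ∧ (k : ℕ) % 2 = 1 ∧ (l : ℕ) < k) := by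
  simp [cellAdj, Nat.even_iff, Nat.odd_iff]

/-- sign pattern of `quotS + 1` -/
noncomputable def eps {m : ℕ} (k l : Fin m) : ℝ :=
  if k = l then 1 else if cellAdj k l then -1 else 1

lemma eps_eq {m : ℕ} (k l : Fin m) :
    eps k l = if (k : ℕ) = l then 1 else
      if ((k : ℕ) % 2 = 0 ∧ (l : ℕ) % 2 = 1 ∧ (k : ℕ) < l) ∨
        ((l : ℕ) % 2 = 0 ∧ (k : ℕ) % 2 = 1 ∧ (l : ℕ) < k) then -1 else 1 := by
  simp [eps, cellAdj_iff, Fin.ext_iff]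

lemma entry (h : ℕ) (a : Fin (2 * h) → ℕ) (k l : Fin (2 * h)) :
    (quotS h a + 1) k l = eps k l * a l := by
  simp only [Matrix.add_apply, Matrix.one_apply, quotS, Matrix.of_apply, eps]
  split_ifs with h1 h2 <;> first | (subst h1; ring) | ring

lemma eps_zero {m : ℕ} (k l : Fin m) (hl : (l : ℕ) = 0) :
    eps k l = if (k : ℕ) % 2 = 0 then 1 else -1 := by
  have hb1 := k.2; have hb2 := l.2
  rw [eps_eq]
  split_ifs <;> first | (exfalso; omega) | norm_num

lemma eps_last {h : ℕ} (hh : 1 ≤ h) (k l : Fin (2 * h)) (hl : (l : ℕ) = 2 * h - 1) :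
    eps k l = if (k : ℕ) % 2 = 0 then -1 else 1 := by
  have hk2 : (k : ℕ) < 2 * h := k.2
  have hb1 := k.2; have hb2 := l.2
  rw [eps_eq]
  split_ifs <;> first | (exfalso; omega) | norm_num

lemma eps_diff {h : ℕ} (k : ℕ) (hk : k + 2 < 2 * h) (l : Fin (2 * h)) :
    eps ⟨k, by omega⟩ l - eps ⟨k + 2, hk⟩ l
      = if (l : ℕ) = k + 1 then (if k % 2 = 0 then (-2 : ℝ) else 2) else 0 := by
  have hb2 := l.2
  rw [eps_eq, eps_eq]
  simp only [Fin.val_mk]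
  split_ifs <;> first | (exfalso; omega) | norm_num

lemma sum_two {n : ℕ} (f : Fin n → ℝ) (i j : Fin n) (hij : i ≠ j)
    (hz : ∀ x, x ≠ i → x ≠ j → f x = 0) :
    ∑ x, f x = f i + f j := by
  have hsub := Finset.sum_subset (Finset.subset_univ ({i, j} : Finset (Fin n)))
    (fun x _ hx => by
      simp only [Finset.mem_insert, Finset.mem_singleton, not_or] at hx
      exact hz x hx.1 hx.2)
  rw [← hsub, Finset.sum_pair hij]

end ChainAux

theorem quotient_seidel_minus_one_simple
    (h : ℕ) (hh : 1 ≤ h) (a : Fin (2 * h) → ℕ) (ha : ∀ k, 1 ≤ a k) :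
    (quotS h a + 1).det = 0 ∧ (quotS h a + 1).rank = 2 * h - 1 := by
  classical
  open ChainAux in
  set M := quotS h a + 1 with hMdef
  have h0 : 0 < 2 * h := by omega
  have hNlt : 2 * h - 1 < 2 * h := by omega
  set i0 : Fin (2 * h) := ⟨0, h0⟩ with hi0
  set iN : Fin (2 * h) := ⟨2 * h - 1, hNlt⟩ with hiN
  have hne : i0 ≠ iN := by
    simp only [hi0, hiN]
    exact Fin.ne_of_val_ne (by show (0 : ℕ) ≠ 2 * h - 1; omega)
  have hacast : ∀ k : Fin (2 * h), (a k : ℝ) ≠ 0 := fun k =>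
    Nat.cast_ne_zero.mpr (by have := ha k; omega)
  set v : Fin (2 * h) → ℝ :=
    fun l => if l = i0 then (a iN : ℝ) else if l = iN then (a i0 : ℝ) else 0 with hv
  have hv0 : v ≠ 0 := by
    intro hz
    have := congrFun hz i0
    simp only [hv, if_pos rfl, Pi.zero_apply] at this
    exact hacast iN this
  -- the key mulVec computation
  have hrowsum : ∀ (w : Fin (2 * h) → ℝ) (k : Fin (2 * h)),
      M.mulVec w k = ∑ l, M k l * w l := by
    intro w k
    simp [Matrix.mulVec, dotProduct]
  have hentry : ∀ k l : Fin (2 * h), M k l = ChainAux.eps k l * a l := by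
    intro k l
    rw [hMdef]
    exact ChainAux.entry h a k l
  have hvi0 : v i0 = (a iN : ℝ) := by simp [hv]
  have hviN : v iN = (a i0 : ℝ) := by simp [hv, hne.symm]
  have hMv : M.mulVec v = 0 := by
    funext k
    rw [hrowsum, Pi.zero_apply]
    rw [ChainAux.sum_two _ i0 iN hne (fun x hx1 hx2 => by
      simp only [hv, if_neg hx1, if_neg hx2, mul_zero])]
    rw [hvi0, hviN, hentry, hentry, ChainAux.eps_zero k i0 rfl,
      ChainAux.eps_last hh k iN rfl]
    split_ifs <;> ring
  have hdet : M.det = 0 := Matrix.exists_mulVec_eq_zero_iff.mp ⟨v, hv0, hMv⟩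
  refine ⟨hdet, ?_⟩
  -- kernel is exactly the span of v
  have hker : LinearMap.ker M.mulVecLin = Submodule.span ℝ {v} := by
    ext w
    simp only [LinearMap.mem_ker, Matrix.mulVecLin_apply, Submodule.mem_span_singleton]
    constructor
    · intro hw
      have hrow : ∀ k : Fin (2 * h), ∑ l, M k l * w l = 0 := fun k => by
        rw [← hrowsum, hw, Pi.zero_apply]
      have hinner : ∀ j : Fin (2 * h), (j : ℕ) ≠ 0 → (j : ℕ) ≠ 2 * h - 1 → w j = 0 := by
        intro j hj0 hjN
        have hjb := j.2
        set k : ℕ := (j : ℕ) - 1 with hk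
        have hk2 : k + 2 < 2 * h := by omega
        have hk1 : k < 2 * h := by omega
        have hjk : (j : ℕ) = k + 1 := by omega
        have hdiff : ∑ l, (M ⟨k, hk1⟩ l - M ⟨k + 2, hk2⟩ l) * w l = 0 := by
          simp only [sub_mul]
          rw [Finset.sum_sub_distrib, hrow, hrow, sub_zero]
        have hterm : ∀ l : Fin (2 * h), (M ⟨k, hk1⟩ l - M ⟨k + 2, hk2⟩ l) * w l
            = if l = j then (if k % 2 = 0 then (-2 : ℝ) else 2) * a j * w j else 0 := by
          intro l
          rw [hentry, hentry, ← sub_mul, ChainAux.eps_diff k hk2 l]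
          by_cases hl : l = j
          · subst hl
            rw [if_pos hjk, if_pos rfl]
          · have hlv : (l : ℕ) ≠ k + 1 := fun hc => hl (Fin.ext (by omega))
            rw [if_neg hlv, if_neg hl, zero_mul, zero_mul]
        rw [Finset.sum_congr rfl (fun l _ => hterm l),
          Finset.sum_ite_eq' Finset.univ j
            (fun _ => (if k % 2 = 0 then (-2 : ℝ) else 2) * a j * w j),
          if_pos (Finset.mem_univ j)] at hdiff
        have hc0 : (if k % 2 = 0 then (-2 : ℝ) else 2) ≠ 0 := by
          split_ifs <;> norm_num
        rcases mul_eq_zero.mp hdiff with hc | hwj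
        · exact absurd hc (mul_ne_zero hc0 (hacast j))
        · exact hwj
      have hsum0 : ∑ l, M i0 l * w l = M i0 i0 * w i0 + M i0 iN * w iN :=
        ChainAux.sum_two _ i0 iN hne (fun x hx1 hx2 => by
          rw [hinner x (fun hc => hx1 (Fin.ext hc)) (fun hc => hx2 (Fin.ext hc)), mul_zero])
      have hMi00 : M i0 i0 = (a i0 : ℝ) := by
        rw [hentry, ChainAux.eps_zero i0 i0 rfl]
        norm_num
      have hMi0N : M i0 iN = -(a iN : ℝ) := by
        rw [hentry, ChainAux.eps_last hh i0 iN rfl]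
        norm_num
      have heq : (a i0 : ℝ) * w i0 = (a iN : ℝ) * w iN := by
        have h1 := hrow i0
        rw [hsum0, hMi00, hMi0N] at h1
        linarith
      refine ⟨w i0 / (a iN : ℝ), ?_⟩
      funext l
      simp only [Pi.smul_apply, smul_eq_mul, hv]
      by_cases hl0 : l = i0
      · subst hl0
        rw [if_pos rfl, div_mul_cancel₀ _ (hacast iN)]
      · by_cases hlN : l = iN
        · subst hlN
          rw [if_neg hl0, if_pos rfl, div_mul_eq_mul_div, div_eq_iff (hacast iN)]
          linear_combination heq
        · rw [if_neg hl0, if_neg hlN, mul_zero,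
            (hinner l (fun hc => hl0 (Fin.ext hc)) (fun hc => hlN (Fin.ext hc))).symm]
    · rintro ⟨c, rfl⟩
      rw [Matrix.mulVec_smul, hMv, smul_zero]
  have hdim : Module.finrank ℝ ↥(LinearMap.ker M.mulVecLin) = 1 := by
    rw [hker]
    exact finrank_span_singleton hv0
  have hrn := LinearMap.finrank_range_add_finrank_ker M.mulVecLin
  rw [hdim, Module.finrank_fin_fun] at hrn
  rw [Matrix.rank]
  omega
end

section
/- Let G be a chain graph with binary string 0^{a_1}1^{a_2}…0^{a_{2h-1}}1^{a_{2h}} and let S̃(G) be its 2h×2h quotient Seidel matrix. For every real number λ ≠ −1, the rank of S̃(G) − λI is at least 2h − 2; consequently, every eigenvalue λ ≠ −1 of S̃(G) has geometric multiplicity at most 2. -/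
open Matrix Polynomial

lemma cellAdj_iff {m : ℕ} (k l : Fin m) :
    cellAdj k l ↔ ((k : ℕ) % 2 = 0 ∧ (l : ℕ) % 2 = 1 ∧ (k : ℕ) < l) ∨
      ((l : ℕ) % 2 = 0 ∧ (k : ℕ) % 2 = 1 ∧ (l : ℕ) < k) := by
  unfold cellAdj
  simp [Nat.even_iff, Nat.odd_iff]

lemma sum_ite_sub_aux {n : ℕ} (i i' : Fin n) (hne : i ≠ i') (f : Fin n → ℝ) :
    ∑ l, (if l = i then (1 : ℝ) else if l = i' then -1 else 0) * f l = f i - f i' := by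
  have key : ∀ l, (if l = i then (1 : ℝ) else if l = i' then -1 else 0) * f l
      = (if l = i then f l else 0) + (if l = i' then -(f l) else 0) := by
    intro l
    by_cases h1 : l = i <;> by_cases h2 : l = i' <;> simp_all
  simp_rw [key, Finset.sum_add_distrib, Finset.sum_ite_eq' Finset.univ, Finset.mem_univ,
    if_true]
  ring

lemma sum_mul_ite_aux {n : ℕ} (i : Fin n) (f : Fin n → ℝ) :
    ∑ l, f l * (if l = i then (1 : ℝ) else 0) = f i := by
  simp [Finset.sum_ite_eq' Finset.univ, mul_ite]

theorem quotient_seidel_eigenvalue_multiplicity_bound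
    (h : ℕ) (hh : 1 ≤ h) (a : Fin (2 * h) → ℕ) (ha : ∀ k, 1 ≤ a k) :
    ∀ lam : ℝ, lam ≠ -1 →
      2 * h - 2 ≤ (quotS h a - lam • (1 : Matrix (Fin (2 * h)) (Fin (2 * h)) ℝ)).rank ∧
      Module.finrank ℝ (Module.End.eigenspace (Matrix.toLin' (quotS h a)) lam) ≤ 2 := by
  intro lam hlam
  have hmu : (1 : ℝ) + lam ≠ 0 := by
    intro h'; apply hlam; linarith
  set M : Matrix (Fin (2 * h)) (Fin (2 * h)) ℝ :=
    quotS h a - lam • (1 : Matrix (Fin (2 * h)) (Fin (2 * h)) ℝ) with hM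
  have hMapp : ∀ k l : Fin (2 * h), M k l =
      (if k = l then (a k : ℝ) - 1 else if cellAdj k l then -(a l : ℝ) else (a l : ℝ)) -
        (if k = l then lam else 0) := by
    intro k l
    simp [hM, quotS, Matrix.sub_apply, Matrix.smul_apply, Matrix.one_apply, mul_ite]
  -- embeddings
  have hemb : ∀ (k : Fin (2 * h - 2)) (j : ℕ), j ≤ 2 → (k : ℕ) + j < 2 * h := by
    intro k j hj; have := k.isLt; omega
  set e0 : Fin (2 * h - 2) → Fin (2 * h) := fun k => ⟨(k : ℕ), hemb k 0 (by norm_num)⟩ with he0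
  set e2 : Fin (2 * h - 2) → Fin (2 * h) := fun k => ⟨(k : ℕ) + 2, hemb k 2 le_rfl⟩ with he2
  have he02 : ∀ k, e0 k ≠ e2 k := by
    intro k hk
    have := congrArg Fin.val hk
    simp [he0, he2] at this
  set P : Matrix (Fin (2 * h - 2)) (Fin (2 * h)) ℝ :=
    Matrix.of fun k l => if l = e0 k then 1 else if l = e2 k then -1 else 0 with hP
  set Q : Matrix (Fin (2 * h)) (Fin (2 * h - 2)) ℝ :=
    Matrix.of fun l j => if l = e0 j then 1 else 0 with hQ
  set C : Matrix (Fin (2 * h - 2)) (Fin (2 * h - 2)) ℝ := P * M * Q with hC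
  have hCapp : ∀ k j, C k j = M (e0 k) (e0 j) - M (e2 k) (e0 j) := by
    intro k j
    have hPM : ∀ l, (P * M) k l = M (e0 k) l - M (e2 k) l := by
      intro l
      simp only [Matrix.mul_apply, hP, Matrix.of_apply]
      exact sum_ite_sub_aux (e0 k) (e2 k) (he02 k) (fun l' => M l' l)
    simp only [hC, Matrix.mul_apply, hQ, Matrix.of_apply]
    calc ∑ l, (P * M) k l * (if l = e0 j then (1:ℝ) else 0)
        = (P * M) k (e0 j) := sum_mul_ite_aux (e0 j) _
      _ = M (e0 k) (e0 j) - M (e2 k) (e0 j) := hPM (e0 j)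
  -- diagonal entries
  have hdiag : ∀ k, C k k = -(1 + lam) := by
    intro k
    rw [hCapp]
    have h1 : e0 k = e0 k := rfl
    have h2 : e2 k ≠ e0 k := (he02 k).symm
    have h3 : ¬ cellAdj (e2 k) (e0 k) := by
      rw [cellAdj_iff]
      simp only [he0, he2]
      omega
    rw [hMapp, hMapp, if_pos h1, if_pos h1, if_neg h2, if_neg h2, if_neg h3]
    have : a (e0 k) = a (e0 k) := rfl
    ring
  -- upper triangular
  have htri : ∀ k j : Fin (2 * h - 2), (j : ℕ) < (k : ℕ) → C k j = 0 := by
    intro k j hjk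
    rw [hCapp]
    have h1 : e0 k ≠ e0 j := by
      intro hk; have := congrArg Fin.val hk; simp [he0] at this; omega
    have h2 : e2 k ≠ e0 j := by
      intro hk; have := congrArg Fin.val hk; simp [he0, he2] at this; omega
    have h3 : cellAdj (e0 k) (e0 j) ↔ cellAdj (e2 k) (e0 j) := by
      rw [cellAdj_iff, cellAdj_iff]
      simp only [he0, he2]
      omega
    rw [hMapp, hMapp, if_neg h1, if_neg h2]
    by_cases hadj : cellAdj (e0 k) (e0 j)
    · rw [if_pos hadj, if_pos (h3.mp hadj)]; simp [if_neg h1, if_neg h2]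
    · rw [if_neg hadj, if_neg (fun hc => hadj (h3.mpr hc))]; simp [if_neg h1, if_neg h2]
  -- determinant
  have hdet : C.det = (-(1 + lam)) ^ (2 * h - 2) := by
    rw [Matrix.det_of_upperTriangular]
    · simp_rw [hdiag]
      simp [Finset.prod_const, Finset.card_univ]
    · intro i j hij
      exact htri i j hij
  have hdetne : C.det ≠ 0 := by
    rw [hdet]
    exact pow_ne_zero _ (neg_ne_zero.mpr hmu)
  have hCrank : C.rank = 2 * h - 2 := by
    rw [Matrix.rank_of_isUnit C ((Matrix.isUnit_iff_isUnit_det C).mpr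
      (isUnit_iff_ne_zero.mpr hdetne))]
    simp
  have hrank : 2 * h - 2 ≤ M.rank := by
    calc 2 * h - 2 = C.rank := hCrank.symm
      _ ≤ (P * M).rank := by rw [hC]; exact Matrix.rank_mul_le_left (P * M) Q
      _ ≤ M.rank := Matrix.rank_mul_le_right P M
  refine ⟨hrank, ?_⟩
  -- eigenspace = ker of mulVecLin M
  have hker : Module.End.eigenspace (Matrix.toLin' (quotS h a)) lam
      = LinearMap.ker M.mulVecLin := by
    ext x
    rw [Module.End.mem_eigenspace_iff, LinearMap.mem_ker]
    rw [Matrix.toLin'_apply, Matrix.mulVecLin_apply]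
    rw [hM, Matrix.sub_mulVec, Matrix.smul_mulVec, Matrix.one_mulVec]
    rw [sub_eq_zero]
  have hrn := LinearMap.finrank_range_add_finrank_ker M.mulVecLin
  have hfr : Module.finrank ℝ (Fin (2 * h) → ℝ) = 2 * h := Module.finrank_fin_fun ℝ
  rw [hfr] at hrn
  have hrange : Module.finrank ℝ (LinearMap.range M.mulVecLin) = M.rank := rfl
  rw [hker]
  have hub : M.rank ≤ 2 * h := Matrix.rank_le_card_width M |>.trans_eq (by simp)
  omega
end
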